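/- Let b₁₁, b₂₂ > 0 and b₁₂ ∈ ℝ with b₁₁b₂₂ − b₁₂² > 0, so that S := [[b₁₁, −b₁₂], [−b₁₂, b₂₂]] is symmetric positive definite. Let (η₁, η₂) and (η̃₁, η̃₂) be independent random vectors, each distributed as the centered bivariate Gaussian N(0, S⁻¹) on ℝ², and set X₁ := ½(η₁² + η̃₁²), X₂ := ½(η₂² + η̃₂²). Then for every t ≥ 0, E[exp(−tX₂) | σ(X₁)] = (b₂₂/(t + b₂₂)) · exp(−b₁₂² t X₁ / (b₂₂(t + b₂₂))) almost surely. -/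

import Mathlib

/-!
Given its first coordinate `u`, the second coordinate of an `N(0, S⁻¹)` vector is Gaussian with
mean `b₁₂ u / b₂₂` and variance `1 / b₂₂`, so completing the square in a one-variable Gaussian
integral gives `E[exp (-t η₂² / 2) | η₁] = condLaplace b₁₂ b₂₂ t η₁`. By independence of the two
copies, `E[exp (-t X₂) | η₁, η̃₁]` is the product of the two conditional Laplace transforms.
This product depends only on `η₁² + η̃₁² = 2 X₁`, hence it is also the conditional expectation
given `X₁`.
-/

open MeasureTheory ProbabilityTheory Matrix

/-- The centered multivariate Gaussian measure on `ℝⁿ` with (positive definite)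
covariance matrix `S`, defined via its density with respect to Lebesgue measure. -/
noncomputable def multivariateGaussian {n : ℕ} (S : Matrix (Fin n) (Fin n) ℝ) :
    Measure (Fin n → ℝ) :=
  volume.withDensity fun x =>
    ENNReal.ofReal ((Real.sqrt ((2 * Real.pi) ^ n * S.det))⁻¹ *
      Real.exp (-(x ⬝ᵥ S⁻¹.mulVec x) / 2))

open Real

structure IsBoundedMeasurable {α : Type*} [MeasurableSpace α] (f : α → ℝ) : Prop where
  measurable : Measurable f
  exists_bound : ∃ C, ∀ x, |f x| ≤ C

namespace IsBoundedMeasurable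

variable {α β : Type*} [MeasurableSpace α] [MeasurableSpace β] {f g : α → ℝ}

lemma comp {h : β → α} (hf : IsBoundedMeasurable f) (hh : Measurable h) :
    IsBoundedMeasurable fun y => f (h y) :=
  ⟨hf.measurable.comp hh, hf.exists_bound.imp fun _ hC y => hC (h y)⟩

lemma mul (hf : IsBoundedMeasurable f) (hg : IsBoundedMeasurable g) :
    IsBoundedMeasurable fun x => f x * g x := by
  obtain ⟨C, hC⟩ := hf.exists_bound
  obtain ⟨D, hD⟩ := hg.exists_bound
  refine ⟨hf.measurable.mul hg.measurable, C * D, fun x => ?_⟩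
  rw [abs_mul]
  exact mul_le_mul (hC x) (hD x) (abs_nonneg _) ((abs_nonneg _).trans (hC x))

lemma integrable_mul (hf : IsBoundedMeasurable f) {μ : Measure α} (hg : Integrable g μ) :
    Integrable (fun x => f x * g x) μ := by
  obtain ⟨C, hC⟩ := hf.exists_bound
  exact hg.bdd_mul hf.measurable.aestronglyMeasurable (ae_of_all _ hC)

lemma integrable (hf : IsBoundedMeasurable f) {μ : Measure α} [IsFiniteMeasure μ] :
    Integrable f μ := by
  obtain ⟨C, hC⟩ := hf.exists_bound
  exact .of_bound hf.measurable.aestronglyMeasurable C (ae_of_all _ hC)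

lemma indicator_one {s : Set α} (hs : MeasurableSet s) :
    IsBoundedMeasurable (s.indicator 1) := by
  refine ⟨measurable_one.indicator hs, 1, fun x => ?_⟩
  by_cases hx : x ∈ s <;> simp [hx]

end IsBoundedMeasurable

section Disintegration

variable {α β γ δ : Type*} [MeasurableSpace α] [MeasurableSpace β] [MeasurableSpace γ]
  [MeasurableSpace δ] {μ : Measure α} {ν : Measure β}

lemma integral_prod_mul_eq_of_forall_integral_snd [SFinite μ] [SFinite ν] {ρ : α × β → ℝ}
    (hρ : Integrable ρ (μ.prod ν)) {e : α × β → ℝ} {φ : α → ℝ} (he : IsBoundedMeasurable e)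
    (hφ : IsBoundedMeasurable φ) (h : ∀ u, ∫ v, e (u, v) * ρ (u, v) ∂ν = φ u * ∫ v, ρ (u, v) ∂ν)
    {ψ : α → ℝ} (hψ : IsBoundedMeasurable ψ) :
    ∫ z, ψ z.1 * e z * ρ z ∂μ.prod ν = ∫ z, ψ z.1 * φ z.1 * ρ z ∂μ.prod ν := by
  rw [integral_prod _ (((hψ.comp measurable_fst).mul he).integrable_mul hρ),
    integral_prod _ (((hψ.comp measurable_fst).mul (hφ.comp measurable_fst)).integrable_mul hρ)]
  congr 1 with u
  simp only [mul_assoc]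
  rw [integral_const_mul, integral_const_mul, h, integral_const_mul]

lemma integral_prod_mul_mul_eq_of_forall_integral [IsFiniteMeasure μ] [IsFiniteMeasure ν]
    {p : α → γ} {q : β → δ} (hp : Measurable p) (hq : Measurable q) {f φ : α → ℝ} {g χ : β → ℝ}
    (hf : IsBoundedMeasurable f) (hφ : IsBoundedMeasurable φ)
    (hg : IsBoundedMeasurable g) (hχ : IsBoundedMeasurable χ)
    (hfφ : ∀ ψ : γ → ℝ, IsBoundedMeasurable ψ → ∫ x, ψ (p x) * f x ∂μ = ∫ x, ψ (p x) * φ x ∂μ)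
    (hgχ : ∀ ψ : δ → ℝ, IsBoundedMeasurable ψ → ∫ y, ψ (q y) * g y ∂ν = ∫ y, ψ (q y) * χ y ∂ν)
    {ψ : γ × δ → ℝ} (hψ : IsBoundedMeasurable ψ) :
    ∫ z, ψ (p z.1, q z.2) * (f z.1 * g z.2) ∂μ.prod ν =
      ∫ z, ψ (p z.1, q z.2) * (φ z.1 * χ z.2) ∂μ.prod ν := by
  have hψpq : IsBoundedMeasurable fun z : α × β => ψ (p z.1, q z.2) := hψ.comp (by fun_prop)
  have hint {f' : α → ℝ} {g' : β → ℝ} (hf' : IsBoundedMeasurable f')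
      (hg' : IsBoundedMeasurable g') :
      Integrable (fun z : α × β => ψ (p z.1, q z.2) * (f' z.1 * g' z.2)) (μ.prod ν) :=
    (hψpq.mul ((hf'.comp measurable_fst).mul (hg'.comp measurable_snd))).integrable
  calc ∫ z, ψ (p z.1, q z.2) * (f z.1 * g z.2) ∂μ.prod ν
      = ∫ z, ψ (p z.1, q z.2) * (f z.1 * χ z.2) ∂μ.prod ν := by
        rw [integral_prod _ (hint hf hg), integral_prod _ (hint hf hχ)]
        congr 1 with x
        simp only [mul_left_comm _ (f x)]
        rw [integral_const_mul, integral_const_mul,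
          hgχ (fun w => ψ (p x, w)) (hψ.comp measurable_prodMk_left)]
    _ = ∫ z, ψ (p z.1, q z.2) * (φ z.1 * χ z.2) ∂μ.prod ν := by
        rw [integral_prod_symm _ (hint hf hχ), integral_prod_symm _ (hint hφ hχ)]
        congr 1 with y
        simp only [mul_comm (f _) (χ y), mul_comm (φ _) (χ y), mul_left_comm _ (χ y)]
        rw [integral_const_mul, integral_const_mul,
          hfφ (fun w => ψ (w, q y)) (hψ.comp measurable_prodMk_right)]

end Disintegration

lemma condExp_comp_eq_of_forall_integral_map {Ω E γ : Type*} [MeasurableSpace Ω]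
    [MeasurableSpace E] [MeasurableSpace γ] {P : Measure Ω} [IsFiniteMeasure P] {Z : Ω → E}
    (hZ : Measurable Z) {r : E → γ} (hr : Measurable r) {F : E → ℝ} (hF : Measurable F)
    (hFi : Integrable F (P.map Z)) {G : γ → ℝ} (hG : Measurable G)
    (hGi : Integrable (fun z => G (r z)) (P.map Z))
    (h : ∀ ψ : γ → ℝ, IsBoundedMeasurable ψ →
      ∫ z, ψ (r z) * F z ∂P.map Z = ∫ z, ψ (r z) * G (r z) ∂P.map Z) :
    P[fun ω => F (Z ω) | MeasurableSpace.comap (fun ω => r (Z ω)) inferInstance] =ᵐ[P]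
      fun ω => G (r (Z ω)) := by
  have hm := (hr.comp hZ).comap_le
  have hGi' := (integrable_map_measure (hG.comp hr).aestronglyMeasurable hZ.aemeasurable).1 hGi
  refine (ae_eq_condExp_of_forall_setIntegral_eq hm
    ((integrable_map_measure hF.aestronglyMeasurable hZ.aemeasurable).1 hFi)
    (fun _ _ _ => hGi'.integrableOn) ?_
    (hG.comp (comap_measurable _)).aestronglyMeasurable).symm
  rintro _ ⟨B, hB, rfl⟩ -
  have hind (H : E → ℝ) (hH : Measurable H) :
      ∫ ω in Z ⁻¹' (r ⁻¹' B), H (Z ω) ∂P = ∫ z, B.indicator 1 (r z) * H z ∂P.map Z := by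
    rw [← setIntegral_map (hr hB) hH.aestronglyMeasurable hZ.aemeasurable,
      ← integral_indicator (hr hB)]
    congr 1 with z
    by_cases hz : r z ∈ B <;> simp [hz]
  change ∫ ω in Z ⁻¹' (r ⁻¹' B), G (r (Z ω)) ∂P = ∫ ω in Z ⁻¹' (r ⁻¹' B), F (Z ω) ∂P
  rw [hind (fun z => G (r z)) (hG.comp hr), hind _ hF, h _ (IsBoundedMeasurable.indicator_one hB)]

/-- The unnormalised centred Gaussian density on `ℝ²` with precision matrix
`[[a, -b], [-b, d]]`. -/
noncomputable def gaussDensity (a b d : ℝ) (z : ℝ × ℝ) : ℝ :=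
  exp (-(a * z.1 ^ 2 - 2 * b * z.1 * z.2 + d * z.2 ^ 2) / 2)

/-- `E[exp (-t Y² / 2) | X = u]` for a centred Gaussian vector `(X, Y)` with precision matrix
`[[a, -b], [-b, d]]`. -/
noncomputable def condLaplace (b d t u : ℝ) : ℝ :=
  √(d / (t + d)) * exp (-(b ^ 2 * t * u ^ 2) / (2 * d * (t + d)))

lemma isBoundedMeasurable_exp_neg_mul_sq {t : ℝ} (ht : 0 ≤ t) :
    IsBoundedMeasurable fun v : ℝ => exp (-(t * v ^ 2) / 2) := by
  refine ⟨by fun_prop, 1, fun v => ?_⟩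
  rw [abs_of_pos (exp_pos _), exp_le_one_iff]
  have := mul_nonneg ht (sq_nonneg v)
  linarith

section Gaussian

variable {a b d : ℝ}

lemma continuous_gaussDensity : Continuous (gaussDensity a b d) := by
  unfold gaussDensity
  fun_prop

lemma gaussDensity_pos (z : ℝ × ℝ) : 0 < gaussDensity a b d z :=
  exp_pos _

lemma gaussDensity_eq (hd : d ≠ 0) (u v : ℝ) :
    gaussDensity a b d (u, v) =
      exp (-((a - b ^ 2 / d) / 2) * u ^ 2) * exp (-(d / 2) * (v - b * u / d) ^ 2) := by
  rw [gaussDensity, ← exp_add]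
  congr 1
  field_simp
  ring

lemma integrable_gaussDensity_snd (hd : 0 < d) (u : ℝ) :
    Integrable fun v => gaussDensity a b d (u, v) := by
  simp_rw [gaussDensity_eq hd.ne']
  exact ((integrable_exp_neg_mul_sq (half_pos hd)).comp_sub_right _).const_mul _

lemma integral_gaussDensity_snd (hd : 0 < d) (u : ℝ) :
    ∫ v, gaussDensity a b d (u, v) = √(2 * π / d) * exp (-((a - b ^ 2 / d) / 2) * u ^ 2) := by
  simp_rw [gaussDensity_eq hd.ne']
  rw [integral_const_mul, integral_sub_right_eq_self (fun v => exp (-(d / 2) * v ^ 2)),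
    integral_gaussian, div_div_eq_mul_div, mul_comm π 2, mul_comm]

lemma integrable_gaussDensity (hd : 0 < d) (hdet : b ^ 2 < a * d) :
    Integrable (gaussDensity a b d) := by
  rw [Measure.volume_eq_prod, integrable_prod_iff continuous_gaussDensity.aestronglyMeasurable]
  refine ⟨ae_of_all _ (integrable_gaussDensity_snd hd), ?_⟩
  simp only [Real.norm_of_nonneg (gaussDensity_pos _).le, integral_gaussDensity_snd hd]
  have : 0 < (a - b ^ 2 / d) / 2 := by
    have : b ^ 2 / d < a := (div_lt_iff₀ hd).2 hdet
    linarith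
  exact (integrable_exp_neg_mul_sq this).const_mul _

lemma exp_neg_mul_sq_mul_gaussDensity (t u v : ℝ) :
    exp (-(t * v ^ 2) / 2) * gaussDensity a b d (u, v) = gaussDensity a b (t + d) (u, v) := by
  rw [gaussDensity, gaussDensity, ← exp_add]
  ring_nf

lemma integral_exp_neg_mul_sq_mul_gaussDensity (hd : 0 < d) {t : ℝ} (htd : 0 < t + d) (u : ℝ) :
    ∫ v, exp (-(t * v ^ 2) / 2) * gaussDensity a b d (u, v) =
      condLaplace b d t u * ∫ v, gaussDensity a b d (u, v) := by
  simp_rw [exp_neg_mul_sq_mul_gaussDensity]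
  rw [integral_gaussDensity_snd htd, integral_gaussDensity_snd hd, condLaplace,
    mul_mul_mul_comm, ← sqrt_mul (by positivity), ← exp_add]
  congr 2
  · field_simp
  · field_simp
    ring

end Gaussian

lemma integral_multivariateGaussian_inv_fin_two {a b d : ℝ} (hdet : a * d - b ^ 2 ≠ 0) :
    ∃ K, ∀ F : (Fin 2 → ℝ) → ℝ,
      ∫ x, F x ∂multivariateGaussian (of ![![a, -b], ![-b, d]])⁻¹ =
        K * ∫ z : ℝ × ℝ, F ![z.1, z.2] * gaussDensity a b d z := by
  set S := of ![![a, -b], ![-b, d]]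
  have hS : IsUnit S.det := by
    rw [isUnit_iff_ne_zero, det_fin_two]
    simpa [S, ← sq] using hdet
  have hquad (x : Fin 2 → ℝ) :
      x ⬝ᵥ S⁻¹⁻¹ *ᵥ x = a * x 0 ^ 2 - 2 * b * x 0 * x 1 + d * x 1 ^ 2 := by
    rw [nonsing_inv_nonsing_inv S hS]
    simp only [S, dotProduct, mulVec, of_apply, cons_val', cons_val_fin_one, Fin.sum_univ_two,
      cons_val_zero, cons_val_one]
    ring
  set K := (√((2 * π) ^ 2 * S⁻¹.det))⁻¹
  refine ⟨K, fun F => ?_⟩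
  rw [_root_.multivariateGaussian, integral_withDensity_eq_integral_toReal_smul (by fun_prop)
    (ae_of_all _ fun _ => ENNReal.ofReal_lt_top), ← integral_const_mul,
    ← (volume_preserving_finTwoArrow ℝ).symm.integral_comp']
  congr 1 with z
  have hz : MeasurableEquiv.finTwoArrow.symm z = ![z.1, z.2] := rfl
  rw [ENNReal.toReal_ofReal (by positivity), smul_eq_mul, hquad, hz, gaussDensity]
  simp only [cons_val_zero, cons_val_one]
  ring

section CondLaplace

variable {b d t : ℝ}

lemma isBoundedMeasurable_condLaplace (hd : 0 < d) (ht : 0 ≤ t) :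
    IsBoundedMeasurable (condLaplace b d t) := by
  refine ⟨by unfold condLaplace; fun_prop, √(d / (t + d)), fun u => ?_⟩
  rw [condLaplace, abs_of_nonneg (by positivity)]
  refine mul_le_of_le_one_right (sqrt_nonneg _) (exp_le_one_iff.2 ?_)
  exact div_nonpos_of_nonpos_of_nonneg (neg_nonpos.2 (by positivity)) (by positivity)

lemma condLaplace_mul_condLaplace (hd : 0 < d) (htd : 0 < t + d) (u v : ℝ) :
    condLaplace b d t u * condLaplace b d t v =
      d / (t + d) * exp (-(b ^ 2 * t * ((u ^ 2 + v ^ 2) / 2)) / (d * (t + d))) := by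
  rw [condLaplace, condLaplace, mul_mul_mul_comm, mul_self_sqrt (by positivity), ← exp_add]
  congr 2
  field_simp
  ring

lemma integral_mul_exp_neg_mul_sq_multivariateGaussian {a : ℝ} (hd : 0 < d)
    (hdet : b ^ 2 < a * d) (ht : 0 ≤ t) {ψ : ℝ → ℝ} (hψ : IsBoundedMeasurable ψ) :
    ∫ x, ψ (x 0) * exp (-(t * x 1 ^ 2) / 2) ∂multivariateGaussian (of ![![a, -b], ![-b, d]])⁻¹ =
      ∫ x, ψ (x 0) * condLaplace b d t (x 0)
        ∂multivariateGaussian (of ![![a, -b], ![-b, d]])⁻¹ := by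
  obtain ⟨K, hK⟩ := integral_multivariateGaussian_inv_fin_two (a := a) (b := b) (d := d)
    (by linarith)
  simp only [hK, cons_val_zero, cons_val_one]
  congr 1
  exact integral_prod_mul_eq_of_forall_integral_snd (integrable_gaussDensity hd hdet)
    ((isBoundedMeasurable_exp_neg_mul_sq ht).comp measurable_snd)
    (isBoundedMeasurable_condLaplace hd ht)
    (integral_exp_neg_mul_sq_mul_gaussDensity hd (by linarith)) hψ

end CondLaplace

theorem conditional_laplace_bivariate_general (b11 b22 b12 : ℝ)
    (hb22 : 0 < b22) (hdet : 0 < b11 * b22 - b12 ^ 2)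
    (S : Matrix (Fin 2) (Fin 2) ℝ)
    (hS : S = Matrix.of ![![b11, -b12], ![-b12, b22]])
    {Ω : Type*} [MeasurableSpace Ω] (P : Measure Ω) [IsProbabilityMeasure P]
    (η η' : Ω → Fin 2 → ℝ) (hη : Measurable η) (hη' : Measurable η')
    (hlawη : Measure.map η P = multivariateGaussian S⁻¹)
    (hlawη' : Measure.map η' P = multivariateGaussian S⁻¹)
    (hindep : IndepFun η η' P)
    (X1 X2 : Ω → ℝ)
    (hX1 : ∀ ω, X1 ω = ((η ω 0) ^ 2 + (η' ω 0) ^ 2) / 2)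
    (hX2 : ∀ ω, X2 ω = ((η ω 1) ^ 2 + (η' ω 1) ^ 2) / 2) :
    ∀ t : ℝ, 0 ≤ t →
      P[(fun ω => Real.exp (-t * X2 ω)) | MeasurableSpace.comap X1 inferInstance]
        =ᵐ[P]
      fun ω => (b22 / (t + b22)) *
        Real.exp (-(b12 ^ 2 * t * X1 ω) / (b22 * (t + b22))) := by
  intro t ht
  subst hS
  set μ := multivariateGaussian (of ![![b11, -b12], ![-b12, b22]])⁻¹
  have : IsProbabilityMeasure μ := hlawη ▸ Measure.isProbabilityMeasure_map hη.aemeasurable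
  have hlaw : P.map (fun ω => (η ω, η' ω)) = μ.prod μ := by
    rw [(indepFun_iff_map_prod_eq_prod_map_map hη.aemeasurable hη'.aemeasurable).1 hindep,
      hlawη, hlawη']
  have hf : IsBoundedMeasurable fun x : Fin 2 → ℝ => exp (-(t * x 1 ^ 2) / 2) :=
    (isBoundedMeasurable_exp_neg_mul_sq ht).comp (measurable_pi_apply 1)
  have hφ : IsBoundedMeasurable fun x : Fin 2 → ℝ => condLaplace b12 b22 t (x 0) :=
    (isBoundedMeasurable_condLaplace hb22 ht).comp (measurable_pi_apply 0)
  have hcond (ψ : ℝ → ℝ) (hψ : IsBoundedMeasurable ψ) :=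
    integral_mul_exp_neg_mul_sq_multivariateGaussian (a := b11) (b := b12) hb22 (by linarith) ht hψ
  have hF (x y : Fin 2 → ℝ) : exp (-t * ((x 1 ^ 2 + y 1 ^ 2) / 2)) =
      exp (-(t * x 1 ^ 2) / 2) * exp (-(t * y 1 ^ 2) / 2) := by
    rw [← exp_add]
    ring_nf
  have hG := condLaplace_mul_condLaplace (b := b12) hb22 (by linarith : 0 < t + b22)
  obtain rfl : X1 = _ := funext hX1
  obtain rfl : X2 = _ := funext hX2
  refine condExp_comp_eq_of_forall_integral_map (hη.prodMk hη')
    (r := fun z => (z.1 0 ^ 2 + z.2 0 ^ 2) / 2) (by fun_prop)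
    (F := fun z => exp (-t * ((z.1 1 ^ 2 + z.2 1 ^ 2) / 2))) (by fun_prop) ?_
    (G := fun a => b22 / (t + b22) * exp (-(b12 ^ 2 * t * a) / (b22 * (t + b22)))) (by fun_prop) ?_
    fun ψ hψ => ?_ <;> simp only [hlaw, hF, ← hG]
  · exact ((hf.comp measurable_fst).mul (hf.comp measurable_snd)).integrable
  · exact ((hφ.comp measurable_fst).mul (hφ.comp measurable_snd)).integrable
  · exact integral_prod_mul_mul_eq_of_forall_integral (measurable_pi_apply 0)
      (measurable_pi_apply 0) hf hφ hf hφ hcond hcond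
      (hψ.comp (h := fun w : ℝ × ℝ => (w.1 ^ 2 + w.2 ^ 2) / 2) (by fun_prop))

/-- Let `S = [[b₁₁, −b₁₂], [−b₁₂, b₂₂]]` be positive definite
(`b₁₁, b₂₂ > 0`, `b₁₁b₂₂ − b₁₂² > 0`), let `η, η'` be independent `N(0, S⁻¹)` vectors
on `ℝ²`, and set `X₁ = ½(η₁² + η'₁²)`, `X₂ = ½(η₂² + η'₂²)`. Then for every `t ≥ 0`,
`E[exp (−t X₂) | σ(X₁)] = (b₂₂/(t + b₂₂)) exp (−b₁₂² t X₁ / (b₂₂ (t + b₂₂)))` a.s. -/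
theorem conditional_laplace_bivariate (b11 b22 b12 : ℝ)
    (hb11 : 0 < b11) (hb22 : 0 < b22) (hdet : 0 < b11 * b22 - b12 ^ 2)
    (S : Matrix (Fin 2) (Fin 2) ℝ)
    (hS : S = Matrix.of ![![b11, -b12], ![-b12, b22]])
    {Ω : Type*} [MeasurableSpace Ω] (P : Measure Ω) [IsProbabilityMeasure P]
    (η η' : Ω → Fin 2 → ℝ) (hη : Measurable η) (hη' : Measurable η')
    (hlawη : Measure.map η P = multivariateGaussian S⁻¹)
    (hlawη' : Measure.map η' P = multivariateGaussian S⁻¹)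
    (hindep : IndepFun η η' P)
    (X1 X2 : Ω → ℝ)
    (hX1 : ∀ ω, X1 ω = ((η ω 0) ^ 2 + (η' ω 0) ^ 2) / 2)
    (hX2 : ∀ ω, X2 ω = ((η ω 1) ^ 2 + (η' ω 1) ^ 2) / 2) :
    ∀ t : ℝ, 0 ≤ t →
      P[(fun ω => Real.exp (-t * X2 ω)) | MeasurableSpace.comap X1 inferInstance]
        =ᵐ[P]
      fun ω => (b22 / (t + b22)) *
        Real.exp (-(b12 ^ 2 * t * X1 ω) / (b22 * (t + b22))) :=
  conditional_laplace_bivariate_general b11 b22 b12 hb22 hdet S hS P η η' hη hη' hlawη hlawη' hindep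
    X1 X2 hX1 hX2
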